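/- arXiv:1512.01229 — 2 statements merged into one kernel-verified Lean document; each statement's English description precedes it below -/
import Mathlib

section
/- Let X be an exchangeable sequence of {0,1}-valued random variables and let ψ_n(t) := Σ_{h=0}^{n} ω_h^(n) e^{i h t} (the characteristic function of the number of successes in n trials). Then the functions t ↦ ψ_n(t/n) converge, uniformly on every compact subset of ℝ, to the entire function ψ(t) := Σ_{h=0}^{∞} ω_h^(h) (i t)^h / h! (the characteristic function of the random phenomenon). -/
open MeasureTheory ProbabilityTheory Filter

def Exchangeable {Ω : Type*} [MeasurableSpace Ω] (P : Measure Ω) (X : ℕ → Ω → ℕ) : Prop :=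
  ∀ (n : ℕ) (σ : Equiv.Perm (Fin n)),
    P.map (fun ω => fun i : Fin n => X (σ i) ω) =
      P.map (fun ω => fun i : Fin n => X i ω)

/-- `succProb P X n h = ω_h^(n)`, the probability of exactly `h` successes in the
first `n` trials. -/
noncomputable def succProb {Ω : Type*} [MeasurableSpace Ω] (P : Measure Ω)
    (X : ℕ → Ω → ℕ) (n h : ℕ) : ℝ :=
  (P {ω | ∑ i ∈ Finset.range n, X i ω = h}).toReal

/-- `allOnes P X h = ω_h^(h) = P(X_0 = ⋯ = X_{h-1} = 1)`, the probability that the first `h`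
trials are all successes (with `allOnes P X 0 = 1` since `P` is a probability measure). -/
noncomputable def allOnes {Ω : Type*} [MeasurableSpace Ω] (P : Measure Ω)
    (X : ℕ → Ω → ℕ) (h : ℕ) : ℝ :=
  (P {ω | ∀ i < h, X i ω = 1}).toReal

/-- `ψ_n(t) = ∑_{h=0}^n ω_h^(n) e^{iht}`, the characteristic function of the number of
successes in the first `n` trials. -/
noncomputable def charFunTrials {Ω : Type*} [MeasurableSpace Ω] (P : Measure Ω)
    (X : ℕ → Ω → ℕ) (n : ℕ) : ℝ → ℂ :=
  fun t => ∑ h ∈ Finset.range (n + 1),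
    (succProb P X n h : ℂ) * Complex.exp (Complex.I * (h : ℂ) * (t : ℂ))

/-!
Put `z = e^{is} - 1`. Expanding `e^{ihs} = (1 + z)^h` binomially turns `ψ_n(s)` into
`∑_k E[C(S_n, k)] z^k`, where `S_n` is the number of successes among the first `n` trials.
`C(S_n, k)` counts the `k`-subsets of these trials consisting of successes only, and by
exchangeability each of the `C(n, k)` subsets is all-successes with probability `ω_k^(k)`,
so `ψ_n(s) = ∑_k C(n, k) ω_k^(k) (e^{is} - 1)^k`. At `s = t/n` the `k`-th term tends to
`ω_k^(k) (it)^k / k!` uniformly on compacts and is bounded by `|t|^k / k!`, so Tannery's theorem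
gives uniform convergence of the whole series.
-/

open Finset Topology Complex
open scoped ENNReal

theorem tendstoUniformlyOn_iff_tendsto_sub {ι α G : Type*} [NormedAddCommGroup G]
    {F : ι → α → G} {f : α → G} {p : Filter ι} {s : Set α} :
    TendstoUniformlyOn F f p s ↔
      Tendsto (fun q : ι × α => F q.1 q.2 - f q.2) (p ×ˢ 𝓟 s) (𝓝 0) := by
  rw [tendstoUniformlyOn_iff_tendsto, uniformity_eq_comap_nhds_zero, tendsto_comap_iff]
  rfl

/-- Tannery's theorem along `p ×ˢ 𝓟 s`, which is how uniform convergence on `s` is encoded. -/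
theorem tendstoUniformlyOn_tsum_of_dominated_convergence {ι α β G : Type*}
    [NormedAddCommGroup G] [CompleteSpace G] {p : Filter ι} [p.NeBot] {s : Set α}
    {F : ι → α → β → G} {f : α → β → G} {bound : β → ℝ} (h_sum : Summable bound)
    (hF : ∀ k, TendstoUniformlyOn (fun n t => F n t k) (fun t => f t k) p s)
    (h_bound : ∀ᶠ n in p, ∀ t ∈ s, ∀ k, ‖F n t k‖ ≤ bound k) :
    TendstoUniformlyOn (fun n t => ∑' k, F n t k) (fun t => ∑' k, f t k) p s := by
  have hf_bound : ∀ t ∈ s, ∀ k, ‖f t k‖ ≤ bound k := fun t ht k =>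
    le_of_tendsto ((hF k).tendsto_at ht).norm (h_bound.mono fun n hn => hn t ht k)
  have h_bound' : ∀ᶠ q in p ×ˢ 𝓟 s, ∀ k, ‖F q.1 q.2 k - f q.2 k‖ ≤ 2 * bound k := by
    refine eventually_prod_principal_iff.mpr (h_bound.mono fun n hn t ht k => ?_)
    linarith [norm_sub_le (F n t k) (f t k), hn t ht k, hf_bound t ht k]
  have h_tsum_sub : ∀ᶠ q in p ×ˢ 𝓟 s,
      ∑' k, (F q.1 q.2 k - f q.2 k) = ∑' k, F q.1 q.2 k - ∑' k, f q.2 k := by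
    refine eventually_prod_principal_iff.mpr (h_bound.mono fun n hn t ht => ?_)
    exact (h_sum.of_norm_bounded (hn t ht)).tsum_sub (h_sum.of_norm_bounded (hf_bound t ht))
  simp_rw [tendstoUniformlyOn_iff_tendsto_sub] at hF ⊢
  simpa using (tendsto_tsum_of_dominated_convergence (h_sum.mul_left 2) hF h_bound').congr'
    h_tsum_sub

theorem TendstoUniformlyOn.mul_pow {α E : Type*} [NormedRing E] [ProperSpace E]
    {a : ℕ → E} {a₀ : E} {W : ℕ → α → E} {w : α → E} {s : Set α} {R : ℝ}
    (ha : Tendsto a atTop (𝓝 a₀)) (hW : TendstoUniformlyOn W w atTop s)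
    (hw : ∀ t ∈ s, ‖w t‖ ≤ R) (k : ℕ) :
    TendstoUniformlyOn (fun n t => a n * W n t ^ k) (fun t => a₀ * w t ^ k) atTop s := by
  have hg : UniformContinuousOn (fun q : E × E => q.1 * q.2 ^ k)
      (Metric.closedBall a₀ 1 ×ˢ Metric.closedBall 0 (R + 1)) :=
    (isCompact_closedBall _ _).prod (isCompact_closedBall _ _) |>.uniformContinuousOn_of_continuous
      (by fun_prop)
  rw [Metric.tendstoUniformlyOn_iff] at hW
  have hpair : TendstoUniformlyOn (fun n t => (a n, W n t)) (fun t => (a₀, w t)) atTop s := by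
    refine Metric.tendstoUniformlyOn_iff.mpr fun ε hε => ?_
    filter_upwards [hW ε hε, Metric.tendsto_nhds.mp ha ε hε] with n hWn han t ht
    exact max_lt (by rwa [dist_comm]) (hWn t ht)
  refine hg.comp_tendstoUniformlyOn_eventually ?_ (fun t ht => ?_) hpair
  · filter_upwards [hW 1 one_pos, ha.eventually (Metric.closedBall_mem_nhds a₀ one_pos)]
      with n hWn han t ht
    refine ⟨han, ?_⟩
    calc dist (W n t) 0 ≤ dist (w t) (W n t) + dist (w t) 0 := dist_triangle_left _ _ _
      _ ≤ 1 + R := add_le_add (hWn t ht).le (by simpa using hw t ht)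
      _ = R + 1 := add_comm _ _
  · exact ⟨Metric.mem_closedBall_self zero_le_one,
      mem_closedBall_zero_iff.mpr ((hw t ht).trans (by linarith))⟩

theorem tendsto_choose_div_pow (k : ℕ) :
    Tendsto (fun n : ℕ => (n.choose k : ℝ) / n ^ k) atTop (𝓝 (1 / k.factorial)) := by
  have h := (isEquivalent_choose k).div
    (Asymptotics.IsEquivalent.refl (u := fun n : ℕ => (n : ℝ) ^ k))
  refine h.symm.tendsto_nhds (tendsto_const_nhds.congr' ?_)
  filter_upwards [eventually_ge_atTop 1] with n hn
  have : (n : ℝ) ^ k ≠ 0 := pow_ne_zero _ (by exact_mod_cast (by omega : n ≠ 0))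
  simp only [Pi.div_apply]
  field_simp

theorem norm_natCast_mul_exp_sub_one_sub_le {n : ℕ} {t : ℝ} (ht : |t| ≤ n) :
    ‖(n : ℂ) * (cexp (I * ↑(t / n)) - 1) - I * t‖ ≤ t ^ 2 / n := by
  rcases Nat.eq_zero_or_pos n with rfl | hn
  · obtain rfl : t = 0 := by simpa using ht
    simp
  have hn0 : (0 : ℝ) < n := by exact_mod_cast hn
  have hnorm : ‖I * ↑(t / n)‖ = |t| / n := by simp
  have heq : (n : ℂ) * (cexp (I * ↑(t / n)) - 1) - I * t =
      n * (cexp (I * ↑(t / n)) - 1 - I * ↑(t / n)) := by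
    have hnC : (n : ℂ) ≠ 0 := by exact_mod_cast hn.ne'
    push_cast
    field_simp
  calc _ = n * ‖cexp (I * ↑(t / n)) - 1 - I * ↑(t / n)‖ := by
        rw [heq, norm_mul, Complex.norm_natCast]
    _ ≤ n * (|t| / n) ^ 2 := by
        rw [← hnorm]
        gcongr
        exact norm_exp_sub_one_sub_id_le (hnorm ▸ (div_le_one hn0).mpr ht)
    _ = t ^ 2 / n := by
        field_simp
        rw [sq_abs]

theorem tendstoUniformlyOn_natCast_mul_exp_sub_one {K : Set ℝ} (hK : Bornology.IsBounded K) :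
    TendstoUniformlyOn (fun (n : ℕ) (t : ℝ) => (n : ℂ) * (cexp (I * ↑(t / n)) - 1))
      (fun t => I * t) atTop K := by
  obtain ⟨R, hR⟩ := hK.subset_closedBall 0
  rw [tendstoUniformlyOn_iff_tendsto_sub]
  refine squeeze_zero_norm' (a := fun q : ℕ × ℝ => R ^ 2 / q.1) ?_
    ((tendsto_const_div_atTop_nhds_zero_nat (R ^ 2)).comp tendsto_fst)
  refine eventually_prod_principal_iff.mpr ?_
  filter_upwards [eventually_ge_atTop ⌈R⌉₊] with n hn t ht
  have htR : |t| ≤ R := by simpa using hR ht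
  have htR_sq : t ^ 2 ≤ R ^ 2 := by
    rw [← sq_abs]
    exact pow_le_pow_left₀ (abs_nonneg t) htR 2
  refine (norm_natCast_mul_exp_sub_one_sub_le (htR.trans ((Nat.le_ceil R).trans ?_))).trans
    (div_le_div_of_nonneg_right htR_sq n.cast_nonneg)
  exact_mod_cast hn

theorem norm_choose_mul_exp_sub_one_pow_le (n k : ℕ) (t : ℝ) :
    ‖(n.choose k : ℂ) * (cexp (I * ↑(t / n)) - 1) ^ k‖ ≤ |t| ^ k / k.factorial := by
  have hz : ‖cexp (I * ↑(t / n)) - 1‖ ≤ |t| / n := by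
    simpa [abs_div] using Real.norm_exp_I_mul_ofReal_sub_one_le (x := t / n)
  have hnt : (n : ℝ) * (|t| / n) ≤ |t| := by
    rcases Nat.eq_zero_or_pos n with rfl | hn
    · simp
    · rw [mul_div_cancel₀ _ (by positivity)]
  calc _ = (n.choose k : ℝ) * ‖cexp (I * ↑(t / n)) - 1‖ ^ k := by
        rw [norm_mul, norm_pow, Complex.norm_natCast]
    _ ≤ (n ^ k / k.factorial) * (|t| / n) ^ k := by
        gcongr
        exact Nat.choose_le_pow_div k n
    _ = ((n : ℝ) * (|t| / n)) ^ k / k.factorial := by ring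
    _ ≤ |t| ^ k / k.factorial := by gcongr

/-- The term is `c * (C(n, k) / n^k) * (n (e^{it/n} - 1))^k`, so `TendstoUniformlyOn.mul_pow`
applies. -/
theorem tendstoUniformlyOn_mul_choose_mul_exp_sub_one_pow {K : Set ℝ}
    (hK : Bornology.IsBounded K) (c : ℂ) (k : ℕ) :
    TendstoUniformlyOn (fun (n : ℕ) (t : ℝ) => c * n.choose k * (cexp (I * ↑(t / n)) - 1) ^ k)
      (fun t => c * (I * t) ^ k / k.factorial) atTop K := by
  obtain ⟨R, hR⟩ := hK.subset_closedBall 0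
  have hlim : Tendsto (fun n : ℕ => c * ((n.choose k : ℝ) / n ^ k : ℝ)) atTop
      (𝓝 (c * ((1 / k.factorial : ℝ) : ℂ))) :=
    tendsto_const_nhds.mul (continuous_ofReal.tendsto _ |>.comp (tendsto_choose_div_pow k))
  refine ((TendstoUniformlyOn.mul_pow (R := R) hlim (tendstoUniformlyOn_natCast_mul_exp_sub_one hK)
    (fun t ht => ?_) k).congr ?_).congr_right fun t _ => ?_
  · simpa using hR ht
  · filter_upwards [eventually_ge_atTop 1] with n hn t _
    have hnC : (n : ℂ) ≠ 0 := by exact_mod_cast (by omega : n ≠ 0)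
    push_cast
    rw [mul_pow]
    field_simp
  · push_cast
    ring

theorem sum_mul_one_add_pow {R : Type*} [CommSemiring R] (p : ℕ → R) (z : R) (n : ℕ) :
    ∑ h ∈ range (n + 1), p h * (1 + z) ^ h =
      ∑ k ∈ range (n + 1), (∑ h ∈ range (n + 1), (h.choose k : R) * p h) * z ^ k := by
  have hbinom : ∀ h ∈ range (n + 1),
      (1 + z) ^ h = ∑ k ∈ range (n + 1), (h.choose k : R) * z ^ k := by
    intro h hh
    rw [add_comm, add_pow]
    refine sum_subset (range_subset_range.mpr (by simpa [Nat.lt_succ_iff] using hh))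
      (fun k _ hk => ?_) |>.trans (sum_congr rfl fun k _ => by ring)
    rw [Nat.choose_eq_zero_of_lt (by simpa using hk), Nat.cast_zero, mul_zero]
  simp_rw [sum_mul]
  rw [sum_congr rfl fun h hh => by rw [hbinom h hh, mul_sum], sum_comm]
  exact sum_congr rfl fun k _ => sum_congr rfl fun h _ => by ring

theorem Finset.card_filter_powersetCard_forall {ι : Type*} (s : Finset ι) (p : ι → Prop)
    [DecidablePred p] (k : ℕ) :
    #{A ∈ s.powersetCard k | ∀ i ∈ A, p i} = (#{i ∈ s | p i}).choose k := by
  rw [← card_powersetCard]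
  congr 1
  ext A
  simp only [mem_filter, mem_powersetCard, subset_iff]
  grind

theorem lintegral_comp_eq_sum_range {Ω : Type*} [MeasurableSpace Ω] {P : Measure Ω} {S : Ω → ℕ}
    (hS : Measurable S) {n : ℕ} (hSn : ∀ ω, S ω ≤ n) (g : ℕ → ℝ≥0∞) :
    ∫⁻ ω, g (S ω) ∂P = ∑ h ∈ range (n + 1), g h * P {ω | S ω = h} := by
  rw [← lintegral_map (by fun_prop) hS, lintegral_countable', tsum_eq_sum]
  · refine sum_congr rfl fun h _ => ?_
    rw [Measure.map_apply hS (measurableSet_singleton h)]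
    rfl
  · intro h hh
    have hempty : S ⁻¹' {h} = ∅ := Set.eq_empty_of_forall_notMem fun ω hω =>
      hh (mem_range.mpr (Nat.lt_succ_of_le ((hω : S ω = h) ▸ hSn ω)))
    rw [Measure.map_apply hS (measurableSet_singleton h), hempty, measure_empty, mul_zero]

theorem norm_allOnes_le_one {Ω : Type*} [MeasurableSpace Ω] (P : Measure Ω)
    [IsProbabilityMeasure P] (X : ℕ → Ω → ℕ) (k : ℕ) : ‖(allOnes P X k : ℂ)‖ ≤ 1 := by
  unfold allOnes
  rw [Complex.norm_real, Real.norm_of_nonneg ENNReal.toReal_nonneg]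
  exact measureReal_le_one

section Exchangeable

variable {Ω : Type*} [MeasurableSpace Ω] {P : Measure Ω} {X : ℕ → Ω → ℕ}

theorem Exchangeable.measure_forall_map_eq_one (hX : ∀ k, Measurable (X k))
    (hexch : Exchangeable P X) {n : ℕ} (σ : Equiv.Perm (Fin n)) (s : Finset (Fin n)) :
    P {ω | ∀ i ∈ s.map σ.toEmbedding, X i ω = 1} = P {ω | ∀ i ∈ s, X i ω = 1} := by
  have hT : MeasurableSet {x : Fin n → ℕ | ∀ i ∈ s, x i = 1} := by
    simp only [Set.ofPred_forall]
    exact .biInter s.countable_toSet fun i _ => measurableSet_eq_fun (by fun_prop) (by fun_prop)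
  have h := congrArg (· {x : Fin n → ℕ | ∀ i ∈ s, x i = 1}) (hexch n σ)
  rw [Measure.map_apply (by fun_prop) hT, Measure.map_apply (by fun_prop) hT] at h
  simp only [Finset.forall_mem_map, Equiv.coe_toEmbedding]
  exact h

theorem Exchangeable.measure_forall_mem_eq_one (hX : ∀ k, Measurable (X k))
    (hexch : Exchangeable P X) {n : ℕ} (s : Finset (Fin n)) :
    P {ω | ∀ i ∈ s, X i ω = 1} = P {ω | ∀ i < #s, X i ω = 1} := by
  have hs : #s ≤ n := by simpa using s.card_le_univ
  obtain ⟨σ, hσ⟩ := Equiv.Perm.exists_map_finset_eq {i : Fin n | (i : ℕ) < #s} s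
    (by rw [Fin.card_filter_val_lt, min_eq_right hs])
  conv_lhs => rw [← hσ]
  rw [hexch.measure_forall_map_eq_one hX σ]
  congr 1
  ext ω
  simp only [mem_filter, mem_univ, true_and, Set.mem_ofPred_eq]
  exact ⟨fun h i hi => h ⟨i, hi.trans_le hs⟩ hi, fun h i hi => h i hi⟩

theorem Exchangeable.sum_choose_mul_measure_sum_eq (hX01 : ∀ k ω, X k ω ≤ 1)
    (hX : ∀ k, Measurable (X k)) (hexch : Exchangeable P X) (n k : ℕ) :
    ∑ h ∈ range (n + 1), (h.choose k : ℝ≥0∞) * P {ω | ∑ i ∈ range n, X i ω = h} =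
      n.choose k * P {ω | ∀ i < k, X i ω = 1} := by
  classical
  have hE : ∀ A : Finset (Fin n), MeasurableSet {ω | ∀ i ∈ A, X i ω = 1} := fun A => by
    simp only [Set.ofPred_forall]
    exact .biInter A.countable_toSet fun i _ => hX i (measurableSet_singleton 1)
  have hcount : ∀ ω, ∑ i ∈ range n, X i ω = #{i : Fin n | X i ω = 1} := fun ω => by
    rw [card_filter, ← Fin.sum_univ_eq_sum_range]
    refine sum_congr rfl fun i _ => ?_
    rcases Nat.le_one_iff_eq_zero_or_eq_one.mp (hX01 i ω) with h | h <;> simp [h]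
  calc ∑ h ∈ range (n + 1), (h.choose k : ℝ≥0∞) * P {ω | ∑ i ∈ range n, X i ω = h}
      = ∫⁻ ω, ((∑ i ∈ range n, X i ω).choose k : ℝ≥0∞) ∂P := by
        refine (lintegral_comp_eq_sum_range (by fun_prop) (fun ω => ?_) _).symm
        rw [hcount]
        exact (card_le_univ _).trans_eq (Fintype.card_fin n)
    _ = ∫⁻ ω, ∑ A ∈ (univ : Finset (Fin n)).powersetCard k,
          {ω | ∀ i ∈ A, X i ω = 1}.indicator 1 ω ∂P := by
        refine lintegral_congr fun ω => ?_
        simp only [Set.indicator_apply, Set.mem_ofPred_eq, Pi.one_apply, sum_boole, hcount]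
        norm_cast
        convert (card_filter_powersetCard_forall _ _ k).symm
    _ = ∑ A ∈ (univ : Finset (Fin n)).powersetCard k, P {ω | ∀ i ∈ A, X i ω = 1} := by
        rw [lintegral_finsetSum _ fun A _ => measurable_one.indicator (hE A)]
        exact sum_congr rfl fun A _ => lintegral_indicator_one (hE A)
    _ = n.choose k * P {ω | ∀ i < k, X i ω = 1} := by
        rw [sum_congr rfl fun A hA => (mem_powersetCard.mp hA).2 ▸
          hexch.measure_forall_mem_eq_one hX A]
        simp

theorem Exchangeable.sum_choose_mul_succProb [IsFiniteMeasure P] (hX01 : ∀ k ω, X k ω ≤ 1)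
    (hX : ∀ k, Measurable (X k)) (hexch : Exchangeable P X) (n k : ℕ) :
    ∑ h ∈ range (n + 1), (h.choose k : ℝ) * succProb P X n h = n.choose k * allOnes P X k := by
  have h := congrArg ENNReal.toReal (hexch.sum_choose_mul_measure_sum_eq hX01 hX n k)
  rw [ENNReal.toReal_sum fun h _ => ENNReal.mul_ne_top (ENNReal.natCast_ne_top _)
    (measure_ne_top P _)] at h
  simpa [succProb, allOnes, ENNReal.toReal_mul] using h

theorem Exchangeable.charFunTrials_eq [IsFiniteMeasure P] (hX01 : ∀ k ω, X k ω ≤ 1)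
    (hX : ∀ k, Measurable (X k)) (hexch : Exchangeable P X) (n : ℕ) (s : ℝ) :
    charFunTrials P X n s =
      ∑ k ∈ range (n + 1), (allOnes P X k : ℂ) * n.choose k * (cexp (I * s) - 1) ^ k := by
  have hexp : ∀ h : ℕ, cexp (I * h * s) = (1 + (cexp (I * s) - 1)) ^ h := fun h => by
    rw [add_sub_cancel, ← Complex.exp_nat_mul]
    ring_nf
  simp only [charFunTrials, hexp, sum_mul_one_add_pow]
  refine sum_congr rfl fun k _ => ?_
  have h := congrArg (fun x : ℝ => (x : ℂ)) (hexch.sum_choose_mul_succProb hX01 hX n k)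
  push_cast at h
  rw [h]
  ring

end Exchangeable

/-- the functions `t ↦ ψ_n(t/n)` converge, uniformly on every compact subset of
`ℝ`, to the entire function `ψ(t) = ∑_{h=0}^∞ ω_h^(h) (it)^h / h!` (the characteristic
function of the random phenomenon). -/
theorem deFinetti_stmt5 {Ω : Type*} [MeasurableSpace Ω] (P : Measure Ω)
    [IsProbabilityMeasure P] (X : ℕ → Ω → ℕ)
    (hX01 : ∀ k ω, X k ω ≤ 1) (hXmeas : ∀ k, Measurable (X k))
    (hexch : Exchangeable P X) :
    ∀ K : Set ℝ, IsCompact K →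
      TendstoUniformlyOn (fun (n : ℕ) (t : ℝ) => charFunTrials P X n (t / n))
        (fun t => ∑' h : ℕ, (allOnes P X h : ℂ) * (Complex.I * (t : ℂ)) ^ h / (h.factorial : ℂ))
        atTop K := by
  intro K hK
  obtain ⟨R, hR⟩ := hK.isBounded.subset_closedBall 0
  have hbound : ∀ n : ℕ, ∀ t ∈ K, ∀ k,
      ‖(allOnes P X k : ℂ) * n.choose k * (cexp (I * ↑(t / n)) - 1) ^ k‖ ≤ R ^ k / k.factorial := by
    intro n t ht k
    have htR : |t| ≤ R := by simpa using hR ht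
    rw [mul_assoc, norm_mul]
    calc _ ≤ 1 * (|t| ^ k / k.factorial) := mul_le_mul (norm_allOnes_le_one P X k)
          (norm_choose_mul_exp_sub_one_pow_le n k t) (norm_nonneg _) zero_le_one
      _ ≤ R ^ k / k.factorial := by
          rw [one_mul]
          gcongr
  refine (tendstoUniformlyOn_tsum_of_dominated_convergence (Real.summable_pow_div_factorial R)
    (fun k => tendstoUniformlyOn_mul_choose_mul_exp_sub_one_pow hK.isBounded _ k)
    (.of_forall hbound)).congr (.of_forall fun n t _ => ?_)
  dsimp only
  rw [hexch.charFunTrials_eq hX01 hXmeas, tsum_eq_sum fun k hk => ?_]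
  rw [Nat.choose_eq_zero_of_lt (by simpa [Nat.lt_succ_iff] using hk)]
  simp
end

section
/- (Bayesian updating of the mixing measure) Let X be an exchangeable sequence of {0,1}-valued random variables with de Finetti measure μ, let r, s ≥ 0, and suppose Z := ∫₀¹ ξ^r (1−ξ)^s dμ(ξ) > 0 (equivalently, P(X_0 + ⋯ + X_{r+s−1} = r) > 0). Then, under the conditional probability measure P(· | X_0 + ⋯ + X_{r+s−1} = r), the shifted sequence (X_{r+s+k})_{k≥0} is exchangeable and the probability measure μ' on [0,1] with density ξ ↦ ξ^r (1−ξ)^s / Z with respect to μ is a de Finetti measure for it. -/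
open MeasureTheory ProbabilityTheory Filter

/-- A probability measure `μ` on `[0,1]` is a de Finetti measure for the sequence `X` if
`ω_h^(n) = C(n,h) ∫₀¹ ξ^h (1-ξ)^{n-h} dμ(ξ)` for all `1 ≤ n` and `h ≤ n`. -/
def IsDeFinettiMeasure {Ω : Type*} [MeasurableSpace Ω] (P : Measure Ω)
    (X : ℕ → Ω → ℕ) (μ : Measure ℝ) : Prop :=
  IsProbabilityMeasure μ ∧ μ (Set.Icc (0:ℝ) 1)ᶜ = 0 ∧
    ∀ n h : ℕ, 1 ≤ n → h ≤ n →
      succProb P X n h =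
        (n.choose h : ℝ) * ∫ ξ in Set.Icc (0:ℝ) 1, ξ ^ h * (1 - ξ) ^ (n - h) ∂μ

/-!
For a binary exchangeable sequence, the probability that the successes among the first `n` trials
occupy exactly the positions `S` depends only on `|S|`; since there are `C(n, h)` such patterns
with `|S| = h`, the de Finetti identity gives `P(pattern S) = ∫ ξ^|S| (1 - ξ)^(n - |S|) dμ`.
The event "`r` successes among the first `r + s` trials and `h` among the next `n`" is a union of
`C(r + s, r) C(n, h)` patterns of length `r + s + n`, so its probability is
`C(r + s, r) C(n, h) ∫ ξ^(r + h) (1 - ξ)^(s + n - h) dμ`. Dividing by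
`P(r successes among r + s) = C(r + s, r) Z` yields the de Finetti identity for the reweighted
measure. Exchangeability under the conditional measure uses the permutations of the first
`r + s + n` indices that fix the first `r + s`.
-/

open scoped Pointwise

theorem Finset.exists_perm_apply_mem_iff_of_card_eq {α : Type*} [DecidableEq α] {S T : Finset α}
    (h : S.card = T.card) : ∃ σ : Equiv.Perm α, ∀ i, σ i ∈ T ↔ i ∈ S := by
  have := Set.powersetCard.isPretransitive (α := α) (n := S.card)
  obtain ⟨σ, hσ⟩ := MulAction.exists_smul_eq (Equiv.Perm α)
    (⟨S, rfl⟩ : Set.powersetCard α S.card) ⟨T, h.symm⟩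
  refine ⟨σ, fun i => ?_⟩
  have hT : T = σ • S := congrArg Subtype.val hσ.symm
  rw [hT, ← Finset.smul_mem_smul_finset_iff σ⁻¹]
  simp

section Successes

variable {Ω : Type*}

def successes (X : ℕ → Ω → ℕ) (n : ℕ) (ω : Ω) : Finset (Fin n) :=
  {i | X i ω = 1}

theorem measurableSet_successes_preimage [MeasurableSpace Ω] {X : ℕ → Ω → ℕ}
    (hX : ∀ k, Measurable (X k)) (n : ℕ) (T : Set (Finset (Fin n))) :
    MeasurableSet (successes X n ⁻¹' T) :=
  (measurable_pi_lambda (fun ω (i : Fin n) => X i ω) fun i => hX i)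
    ({v | ({i | v i = 1} : Finset (Fin n)) ∈ T} : Set (Fin n → ℕ)).to_countable.measurableSet

theorem sum_range_eq_card_successes {X : ℕ → Ω → ℕ} (hX01 : ∀ k ω, X k ω ≤ 1)
    (n : ℕ) (ω : Ω) :
    ∑ i ∈ Finset.range n, X i ω = (successes X n ω).card := by
  rw [← Fin.sum_univ_eq_sum_range (X · ω), successes, Finset.card_filter]
  refine Finset.sum_congr rfl fun i _ => ?_
  rcases Nat.le_one_iff_eq_zero_or_eq_one.1 (hX01 i ω) with h | h <;> simp [h]

theorem successes_add_eq (X : ℕ → Ω → ℕ) (m n : ℕ) (ω : Ω) :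
    successes X (m + n) ω =
      (Finset.sumEquiv.toEquiv.symm.trans finSumFinEquiv.finsetCongr)
        (successes X m ω, successes (fun k => X (m + k)) n ω) := by
  ext k
  refine Fin.addCases (fun i => ?_) (fun j => ?_) k <;> simp [successes]

end Successes

section Exchangeable

variable {Ω : Type*} [MeasurableSpace Ω] {P : Measure Ω} {X : ℕ → Ω → ℕ}

theorem Exchangeable.measure_preimage_perm (hexch : Exchangeable P X)
    (hX : ∀ k, Measurable (X k)) {n : ℕ} (σ : Equiv.Perm (Fin n)) (D : Set (Fin n → ℕ)) :
    P ((fun ω i => X (σ i) ω) ⁻¹' D) = P ((fun ω (i : Fin n) => X i ω) ⁻¹' D) := by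
  rw [← Measure.map_apply (measurable_pi_lambda _ fun i => hX _) D.to_countable.measurableSet,
    ← Measure.map_apply (measurable_pi_lambda _ fun i => hX _) D.to_countable.measurableSet,
    hexch n σ]

theorem Exchangeable.measure_successes_eq_of_card_eq (hexch : Exchangeable P X)
    (hX : ∀ k, Measurable (X k)) {n : ℕ} {S T : Finset (Fin n)} (hST : S.card = T.card) :
    P (successes X n ⁻¹' {S}) = P (successes X n ⁻¹' {T}) := by
  obtain ⟨σ, hσ⟩ := Finset.exists_perm_apply_mem_iff_of_card_eq hST
  have hpre : successes X n ⁻¹' {T} =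
      (fun ω i => X (σ i) ω) ⁻¹' {v | ({i | v i = 1} : Finset (Fin n)) = S} := by
    ext ω
    simp only [Set.mem_preimage, Set.mem_singleton_iff, Set.mem_ofPred_eq, successes,
      Finset.ext_iff, Finset.mem_filter_univ, ← hσ]
    exact (σ.forall_congr fun _ => Iff.rfl).symm
  rw [hpre, hexch.measure_preimage_perm hX]
  rfl

theorem Exchangeable.measureReal_sum_range_eq_choose_mul [IsFiniteMeasure P]
    (hexch : Exchangeable P X) (hX : ∀ k, Measurable (X k)) (hX01 : ∀ k ω, X k ω ≤ 1)
    {n : ℕ} (S : Finset (Fin n)) :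
    P.real {ω | ∑ i ∈ Finset.range n, X i ω = S.card} =
      n.choose S.card * P.real (successes X n ⁻¹' {S}) := by
  have hpre : {ω | ∑ i ∈ Finset.range n, X i ω = S.card} =
      successes X n ⁻¹' ↑(Finset.powersetCard S.card (Finset.univ : Finset (Fin n))) := by
    ext ω
    simp [sum_range_eq_card_successes hX01]
  rw [hpre, ← sum_measureReal_preimage_singleton _ fun T _ =>
    measurableSet_successes_preimage hX n _]
  rw [Finset.sum_congr rfl fun T hT => ?_, Finset.sum_const, Finset.card_powersetCard,
    Finset.card_univ, Fintype.card_fin, nsmul_eq_mul]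
  simp only [measureReal_def,
    hexch.measure_successes_eq_of_card_eq hX (Finset.mem_powersetCard_univ.1 hT)]

theorem Exchangeable.cond_shift (hexch : Exchangeable P X) (hX : ∀ k, Measurable (X k))
    {m : ℕ} (D : Set (Fin m → ℕ)) :
    Exchangeable (P[|(fun ω (i : Fin m) => X i ω) ⁻¹' D]) (fun k => X (m + k)) := by
  intro n σ
  have hA : MeasurableSet ((fun ω (i : Fin m) => X i ω) ⁻¹' D) :=
    measurable_pi_lambda (fun ω (i : Fin m) => X i ω) (fun i => hX i) D.to_countable.measurableSet
  ext E hE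
  rw [Measure.map_apply (measurable_pi_lambda _ fun i => hX _) hE,
    Measure.map_apply (measurable_pi_lambda _ fun i => hX _) hE, cond_apply hA, cond_apply hA]
  congr 1
  let τ : Equiv.Perm (Fin (m + n)) := finSumFinEquiv.permCongr (Equiv.sumCongr 1 σ)
  let D' : Set (Fin (m + n) → ℕ) :=
    {v | (fun i => v (Fin.castAdd n i)) ∈ D ∧ (fun j => v (Fin.natAdd m j)) ∈ E}
  have hτ : (fun ω i => X (τ i) ω) ⁻¹' D' =
      (fun ω (i : Fin m) => X i ω) ⁻¹' D ∩ (fun ω i => X (m + σ i) ω) ⁻¹' E := by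
    ext ω
    simp [τ, D']
  have hid : (fun ω (i : Fin (m + n)) => X i ω) ⁻¹' D' =
      (fun ω (i : Fin m) => X i ω) ⁻¹' D ∩
        (fun ω (i : Fin n) => X (m + i) ω) ⁻¹' E := by
    ext ω
    simp [D']
  rw [← hτ, ← hid, hexch.measure_preimage_perm hX]

end Exchangeable

section Density

variable {α : Type*} [MeasurableSpace α] {μ : Measure α} {g : α → ℝ} {s : Set α}

theorem setIntegral_withDensity_ofReal (hg : Measurable g) (hs : MeasurableSet s)
    (hg0 : ∀ x ∈ s, 0 ≤ g x) (φ : α → ℝ) :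
    ∫ x in s, φ x ∂μ.withDensity (fun x => ENNReal.ofReal (g x)) =
      ∫ x in s, g x * φ x ∂μ := by
  rw [setIntegral_withDensity_eq_setIntegral_toReal_smul hg.ennreal_ofReal
    (ae_of_all _ fun _ => ENNReal.ofReal_lt_top) _ hs]
  exact setIntegral_congr_fun hs fun x hx => by simp [ENNReal.toReal_ofReal (hg0 x hx)]

theorem isProbabilityMeasure_withDensity_ofReal_div (hs : ∀ᵐ x ∂μ, x ∈ s)
    (hg : IntegrableOn g s μ) (hg0 : ∀ x ∈ s, 0 ≤ g x) (hZ : 0 < ∫ x in s, g x ∂μ) :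
    IsProbabilityMeasure
      (μ.withDensity fun x => ENNReal.ofReal (g x / ∫ x in s, g x ∂μ)) := by
  have hμs : μ.restrict s = μ := Measure.restrict_eq_self_of_ae_mem hs
  rw [IntegrableOn, hμs] at hg
  rw [hμs] at hZ ⊢
  have hg0' : 0 ≤ᵐ[μ] fun x => g x / ∫ x, g x ∂μ := by
    filter_upwards [hs] with x hx using div_nonneg (hg0 x hx) hZ.le
  constructor
  rw [withDensity_apply _ MeasurableSet.univ, Measure.restrict_univ,
    ← ofReal_integral_eq_lintegral_ofReal (hg.div_const _) hg0', integral_div, div_self hZ.ne',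
    ENNReal.ofReal_one]

end Density

section DeFinetti

variable {Ω : Type*} [MeasurableSpace Ω] {P : Measure Ω} [IsProbabilityMeasure P]
  {X : ℕ → Ω → ℕ} {μ : Measure ℝ}

theorem IsDeFinettiMeasure.measureReal_successes (hμ : IsDeFinettiMeasure P X μ)
    (hexch : Exchangeable P X) (hX : ∀ k, Measurable (X k)) (hX01 : ∀ k ω, X k ω ≤ 1)
    {n : ℕ} (S : Finset (Fin n)) :
    P.real (successes X n ⁻¹' {S}) =
      ∫ ξ in Set.Icc (0:ℝ) 1, ξ ^ S.card * (1 - ξ) ^ (n - S.card) ∂μ := by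
  rcases n.eq_zero_or_pos with rfl | hn
  · have hμ1 : μ (Set.Icc 0 1) = 1 := by
      have := hμ.1
      exact (prob_compl_eq_zero_iff measurableSet_Icc).1 hμ.2.1
    obtain rfl : S = ∅ := Subsingleton.elim _ _
    have huniv : successes X 0 ⁻¹' {∅} = Set.univ := by
      ext ω
      simp [Subsingleton.elim (successes X 0 ω) ∅]
    simp [huniv, measureReal_def, hμ1]
  · have hS : S.card ≤ n := (Finset.card_le_univ S).trans_eq (Fintype.card_fin n)
    refine mul_left_cancel₀ (Nat.cast_ne_zero.2 (Nat.choose_pos hS).ne') ?_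
    rw [← hexch.measureReal_sum_range_eq_choose_mul hX hX01 S]
    exact hμ.2.2 n _ hn hS

theorem IsDeFinettiMeasure.measureReal_sum_range_inter (hμ : IsDeFinettiMeasure P X μ)
    (hexch : Exchangeable P X) (hX : ∀ k, Measurable (X k)) (hX01 : ∀ k ω, X k ω ≤ 1)
    {m n r h : ℕ} (hr : r ≤ m) (hh : h ≤ n) :
    P.real ({ω | ∑ i ∈ Finset.range m, X i ω = r} ∩
        {ω | ∑ i ∈ Finset.range n, X (m + i) ω = h}) =
      m.choose r * n.choose h *
        ∫ ξ in Set.Icc (0:ℝ) 1, ξ ^ (r + h) * (1 - ξ) ^ (m - r + (n - h)) ∂μ := by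
  set e := Finset.sumEquiv.toEquiv.symm.trans (finSumFinEquiv (m := m) (n := n)).finsetCongr
  set f := fun ω => (successes X m ω, successes (fun k => X (m + k)) n ω)
  have hpre : {ω | ∑ i ∈ Finset.range m, X i ω = r} ∩
      {ω | ∑ i ∈ Finset.range n, X (m + i) ω = h} =
        f ⁻¹' ↑(Finset.powersetCard r (Finset.univ : Finset (Fin m)) ×ˢ
          Finset.powersetCard h (Finset.univ : Finset (Fin n))) := by
    ext ω
    simp [f, sum_range_eq_card_successes hX01,
      sum_range_eq_card_successes (X := fun k => X (m + k)) fun k => hX01 _]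
  have hfiber : ∀ p, f ⁻¹' {p} = successes X (m + n) ⁻¹' {e p} := by
    intro p
    ext ω
    simp [f, e, successes_add_eq X m n ω, Prod.ext_iff]
  rw [hpre, ← sum_measureReal_preimage_singleton _ fun p _ => by
    rw [hfiber]; exact measurableSet_successes_preimage hX _ _]
  have hconst : ∀ p ∈ Finset.powersetCard r (Finset.univ : Finset (Fin m)) ×ˢ
      Finset.powersetCard h (Finset.univ : Finset (Fin n)), P.real (f ⁻¹' {p}) =
        ∫ ξ in Set.Icc (0:ℝ) 1, ξ ^ (r + h) * (1 - ξ) ^ (m - r + (n - h)) ∂μ := by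
    intro p hp
    obtain ⟨hp1, hp2⟩ := Finset.mem_product.1 hp
    have hcard : (e p).card = r + h := by
      simp [e, Finset.mem_powersetCard_univ.1 hp1, Finset.mem_powersetCard_univ.1 hp2]
    rw [hfiber, hμ.measureReal_successes hexch hX hX01, hcard,
      show m + n - (r + h) = m - r + (n - h) by omega]
  rw [Finset.sum_congr rfl hconst, Finset.sum_const, Finset.card_product,
    Finset.card_powersetCard, Finset.card_powersetCard, Finset.card_univ, Finset.card_univ,
    Fintype.card_fin, Fintype.card_fin, nsmul_eq_mul]
  push_cast
  ring

theorem IsDeFinettiMeasure.succProb_cond (hμ : IsDeFinettiMeasure P X μ)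
    (hexch : Exchangeable P X) (hX : ∀ k, Measurable (X k)) (hX01 : ∀ k ω, X k ω ≤ 1)
    {r s n h : ℕ} (hh : h ≤ n) :
    succProb (P[|{ω | ∑ i ∈ Finset.range (r + s), X i ω = r}]) (fun k => X (r + s + k)) n h =
      n.choose h * ((∫ ξ in Set.Icc (0:ℝ) 1, ξ ^ (r + h) * (1 - ξ) ^ (s + (n - h)) ∂μ) /
        ∫ ξ in Set.Icc (0:ℝ) 1, ξ ^ r * (1 - ξ) ^ s ∂μ) := by
  set A := {ω | ∑ i ∈ Finset.range (r + s), X i ω = r}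
  have hAmeas : MeasurableSet A :=
    (Finset.measurable_sum _ fun i _ => hX i) (measurableSet_singleton r)
  have hPA :
      P.real A = (r + s).choose r * ∫ ξ in Set.Icc (0:ℝ) 1, ξ ^ r * (1 - ξ) ^ s ∂μ := by
    simpa using hμ.measureReal_sum_range_inter hexch hX hX01 (Nat.le_add_right r s) le_rfl
      (n := 0)
  have hPAB := hμ.measureReal_sum_range_inter hexch hX hX01 (Nat.le_add_right r s) hh
  rw [Nat.add_sub_cancel_left] at hPAB
  have hchoose : ((r + s).choose r : ℝ) ≠ 0 :=
    Nat.cast_ne_zero.2 (Nat.choose_pos (Nat.le_add_right r s)).ne'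
  rw [succProb, cond_apply hAmeas, ENNReal.toReal_mul, ENNReal.toReal_inv, inv_mul_eq_div,
    ← measureReal_def, ← measureReal_def, hPAB, hPA, mul_assoc, mul_div_mul_left _ _ hchoose,
    mul_div_assoc]

theorem IsDeFinettiMeasure.cond_withDensity (hμ : IsDeFinettiMeasure P X μ)
    (hexch : Exchangeable P X) (hX : ∀ k, Measurable (X k)) (hX01 : ∀ k ω, X k ω ≤ 1)
    {r s : ℕ} (hZ : 0 < ∫ ξ in Set.Icc (0:ℝ) 1, ξ ^ r * (1 - ξ) ^ s ∂μ) :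
    IsDeFinettiMeasure (P[|{ω | ∑ i ∈ Finset.range (r + s), X i ω = r}])
      (fun k => X (r + s + k))
      (μ.withDensity fun ξ => ENNReal.ofReal
        (ξ ^ r * (1 - ξ) ^ s / ∫ ξ in Set.Icc (0:ℝ) 1, ξ ^ r * (1 - ξ) ^ s ∂μ)) := by
  have := hμ.1
  have hcont : Continuous fun ξ : ℝ => ξ ^ r * (1 - ξ) ^ s := by fun_prop
  have hnonneg : ∀ ξ ∈ Set.Icc (0:ℝ) 1, 0 ≤ ξ ^ r * (1 - ξ) ^ s := fun ξ hξ =>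
    mul_nonneg (pow_nonneg hξ.1 r) (pow_nonneg (sub_nonneg.2 hξ.2) s)
  refine ⟨isProbabilityMeasure_withDensity_ofReal_div (mem_ae_iff.2 hμ.2.1)
      hcont.integrableOn_Icc hnonneg hZ,
    withDensity_absolutelyContinuous _ _ hμ.2.1, fun n h _ hh => ?_⟩
  rw [hμ.succProb_cond hexch hX hX01 hh, setIntegral_withDensity_ofReal
    (hcont.measurable.div_const _) measurableSet_Icc
    (fun ξ hξ => div_nonneg (hnonneg ξ hξ) hZ.le), ← integral_div]
  congr 1
  refine setIntegral_congr_fun measurableSet_Icc fun ξ _ => ?_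
  ring

end DeFinetti

/-- Bayesian updating of the mixing measure: given `r` successes in the first
`r + s` trials (an event of positive probability, equivalently `Z > 0`), the shifted sequence
`(X_{r+s+k})_k` is exchangeable under the conditional measure, and the measure with density
`ξ ↦ ξ^r (1-ξ)^s / Z` with respect to `μ` is a de Finetti measure for it. -/
theorem deFinetti_stmt13 {Ω : Type*} [MeasurableSpace Ω] (P : Measure Ω)
    [IsProbabilityMeasure P] (X : ℕ → Ω → ℕ)
    (hX01 : ∀ k ω, X k ω ≤ 1) (hXmeas : ∀ k, Measurable (X k))
    (hexch : Exchangeable P X) (μ : Measure ℝ) (hμ : IsDeFinettiMeasure P X μ)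
    (r s : ℕ) (hZ : 0 < ∫ ξ in Set.Icc (0:ℝ) 1, ξ ^ r * (1 - ξ) ^ s ∂μ) :
    Exchangeable (P[|{ω | ∑ i ∈ Finset.range (r + s), X i ω = r}])
        (fun k => X (r + s + k)) ∧
      IsDeFinettiMeasure (P[|{ω | ∑ i ∈ Finset.range (r + s), X i ω = r}])
        (fun k => X (r + s + k))
        (μ.withDensity fun ξ =>
          ENNReal.ofReal (ξ ^ r * (1 - ξ) ^ s / ∫ ξ in Set.Icc (0:ℝ) 1, ξ ^ r * (1 - ξ) ^ s ∂μ)) := by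
  have hA : {ω | ∑ i ∈ Finset.range (r + s), X i ω = r} =
      (fun ω (i : Fin (r + s)) => X i ω) ⁻¹' {v | ∑ i, v i = r} := by
    ext ω
    simp [Fin.sum_univ_eq_sum_range (X · ω)]
  exact ⟨hA ▸ hexch.cond_shift hXmeas _, hμ.cond_withDensity hexch hXmeas hX01 hZ⟩
end
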